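/- arXiv:1705.04598 — 3 statements merged into one kernel-verified Lean document; each statement's English description precedes it below -/
import Mathlib

section
/- In any group, if h satisfies h² = 1, then for all g and all k ≥ 0 one has E_{k+1}(g,h) = [g,h]^((-2)^k). -/
namespace AutSG

/-- Commutator with the convention `[x,y] = x⁻¹y⁻¹xy`. -/
def comm {G : Type*} [Group G] (x y : G) : G := x⁻¹ * y⁻¹ * x * y

/-- Iterated commutators: `E₀(g,h) = g`, `E_{c+1}(g,h) = [E_c(g,h), h]`. -/
def engel {G : Type*} [Group G] : ℕ → G → G → G
  | 0, g, _ => g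
  | c + 1, g, h => comm (engel c g h) h

end AutSG

open AutSG

lemma comm_zpow_of_involution {G : Type*} [Group G] (g h : G) (hh : h ^ 2 = 1)
    (n : ℤ) : comm ((comm g h) ^ n) h = (comm g h) ^ (-2 * n) := by
  have h1 : h * h = 1 := by rw [← sq]; exact hh
  have hinv : h⁻¹ = h := by
    rw [inv_eq_iff_mul_eq_one, h1]
  have hconj : h * comm g h * h⁻¹ = (comm g h)⁻¹ := by
    simp only [AutSG.comm, mul_inv_rev, inv_inv, hinv]
    simp [mul_assoc, h1]
  have hconjn : h * (comm g h) ^ n * h⁻¹ = (comm g h) ^ (-n) := by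
    rw [← conj_zpow, hconj, inv_zpow, zpow_neg]
  rw [hinv] at hconjn
  show ((comm g h) ^ n)⁻¹ * h⁻¹ * (comm g h) ^ n * h = _
  rw [hinv, mul_assoc, mul_assoc, ← mul_assoc h, hconjn, ← zpow_neg, ← zpow_add]
  congr 1
  ring

open AutSG in
/-- In any group, if `h² = 1` then `E_{k+1}(g,h) = [g,h]^{(-2)^k}` for all `g`
and all `k ≥ 0`. -/
theorem engel_power_formula_of_involution {G : Type*} [Group G]
    (g h : G) (hh : h ^ 2 = 1) (k : ℕ) :
    engel (k + 1) g h = (comm g h) ^ ((-2 : ℤ) ^ k) := by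
  induction k with
  | zero => simp [engel]
  | succ n ih =>
    show comm (engel (n + 1) g h) h = _
    rw [ih, comm_zpow_of_involution g h hh]
    congr 1
    ring
end

section
/- Let Φ: X × Q → Q × X be a Mealy automaton. Two states q, q' ∈ Q induce the same transformation of X* if and only if w^q = w^{q'} for every word w ∈ X* of length at most |Q|². -/
namespace AutSG

variable {X Q : Type*}

/-- The action of a state `q` of a Mealy automaton `Φ : X × Q → Q × X` on finite
words over `X`, written in terms of the transition function `δ q x = q@x` and the
output function `out q x = x^q`: one has `ε^q = ε` and `(xw)^q = (x^q)(w^{q@x})`. -/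
def mAct (δ : Q → X → Q) (out : Q → X → X) : Q → List X → List X
  | _, [] => []
  | q, x :: w => out q x :: mAct δ out (δ q x) w

/-- The action of a word `g = q₁…q_k` of states on words over `X`:
`w^g = (…(w^{q₁})…)^{q_k}`. -/
def mActW (δ : Q → X → Q) (out : Q → X → X) (g : List Q) (w : List X) : List X :=
  g.foldl (fun w q => mAct δ out q w) w

end AutSG

namespace MealyAux

open AutSG

variable {X Q : Type*}

section Aux

variable (δ : Q → X → Q) (out : Q → X → X)

def agree (n : ℕ) (a b : Q) : Prop :=
  ∀ w : List X, w.length ≤ n → mAct δ out a w = mAct δ out b w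

lemma agree_mono {m n : ℕ} (h : m ≤ n) {a b : Q} (hab : agree δ out n a b) :
    agree δ out m a b := fun w hw => hab w (hw.trans h)

lemma agree_succ_iff (n : ℕ) (a b : Q) :
    agree δ out (n+1) a b ↔ ∀ x, out a x = out b x ∧ agree δ out n (δ a x) (δ b x) := by
  constructor
  · intro h x
    have h1 := h [x] (by simp)
    simp only [mAct, List.cons.injEq] at h1
    refine ⟨h1.1, ?_⟩
    intro w hw
    have h2 := h (x :: w) (by simpa using Nat.succ_le_succ hw)
    simp only [mAct, List.cons.injEq] at h2
    exact h2.2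
  · intro h w hw
    cases w with
    | nil => rfl
    | cons x w =>
      simp only [mAct, List.cons.injEq]
      exact ⟨(h x).1, (h x).2 w (Nat.le_of_succ_le_succ (by simpa using hw))⟩

lemma agree_step {n : ℕ}
    (h : ∀ a b : Q, agree δ out n a b → agree δ out (n+1) a b) :
    ∀ a b : Q, agree δ out (n+1) a b → agree δ out (n+2) a b := by
  intro a b hab
  rw [agree_succ_iff] at hab ⊢
  intro x
  exact ⟨(hab x).1, h _ _ (hab x).2⟩

lemma agree_step_iter {n : ℕ}
    (h : ∀ a b : Q, agree δ out n a b → agree δ out (n+1) a b) :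
    ∀ k, ∀ a b : Q, agree δ out (n+k) a b → agree δ out (n+k+1) a b := by
  intro k
  induction k with
  | zero => exact h
  | succ k ih => exact agree_step δ out ih

lemma agree_of_stable {n : ℕ}
    (h : ∀ a b : Q, agree δ out n a b → agree δ out (n+1) a b) :
    ∀ k, ∀ a b : Q, agree δ out n a b → agree δ out (n+k) a b := by
  intro k
  induction k with
  | zero => intro a b hab; exact hab
  | succ k ih =>
    intro a b hab
    exact agree_step_iter δ out h k a b (ih a b hab)

lemma exists_stable [Fintype Q] :
    ∃ n ≤ Fintype.card Q ^ 2,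
      ∀ a b : Q, agree δ out n a b → agree δ out (n+1) a b := by
  classical
  by_contra hcon
  push_neg at hcon
  set c := Fintype.card Q ^ 2 with hc
  set S : ℕ → Finset (Q × Q) :=
    fun n => Finset.univ.filter (fun p => agree δ out n p.1 p.2) with hS
  have hsub : ∀ n, S (n+1) ⊆ S n := by
    intro n p hp
    simp only [hS, Finset.mem_filter, Finset.mem_univ, true_and] at hp ⊢
    exact agree_mono δ out (Nat.le_succ n) hp
  have hstrict : ∀ n ≤ c, S (n+1) ⊂ S n := by
    intro n hn
    obtain ⟨a, b, h1, h2⟩ := hcon n hn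
    refine (Finset.ssubset_iff_of_subset (hsub n)).mpr ⟨(a, b), ?_, ?_⟩
    · simp only [hS, Finset.mem_filter, Finset.mem_univ, true_and]; exact h1
    · simp only [hS, Finset.mem_filter, Finset.mem_univ, true_and]; exact h2
  have hcard : ∀ n ≤ c + 1, (S n).card + n ≤ Fintype.card (Q × Q) := by
    intro n
    induction n with
    | zero => intro _; simpa using Finset.card_le_univ (S 0)
    | succ n ih =>
      intro hn
      have h1 := Finset.card_lt_card (hstrict n (Nat.le_of_succ_le_succ hn))
      have h2 := ih ((Nat.le_succ n).trans hn)
      omega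
  have hfin := hcard (c + 1) le_rfl
  have hcQ : Fintype.card (Q × Q) = c := by
    rw [Fintype.card_prod, hc, pow_two]
  omega

end Aux

end MealyAux

open AutSG in
/-- Two states `q, q'` of a Mealy automaton `Φ : X × Q → Q × X` induce the same
transformation of `X*` if and only if they agree on all words of length at most
`|Q|²`. -/
theorem mealy_states_eq_iff_eq_on_short_words
    {X Q : Type*} [Fintype X] [Fintype Q] [Nonempty X] [Nonempty Q]
    (Φ : X × Q → Q × X) (q q' : Q) :
    (∀ w : List X,
        mAct (fun s x => (Φ (x, s)).1) (fun s x => (Φ (x, s)).2) q w =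
        mAct (fun s x => (Φ (x, s)).1) (fun s x => (Φ (x, s)).2) q' w) ↔
    (∀ w : List X, w.length ≤ Fintype.card Q ^ 2 →
        mAct (fun s x => (Φ (x, s)).1) (fun s x => (Φ (x, s)).2) q w =
        mAct (fun s x => (Φ (x, s)).1) (fun s x => (Φ (x, s)).2) q' w) := by
  set δ : Q → X → Q := fun s x => (Φ (x, s)).1
  set out : Q → X → X := fun s x => (Φ (x, s)).2
  constructor
  · intro h w _
    exact h w
  · intro h w
    obtain ⟨n, hn, hstable⟩ := MealyAux.exists_stable δ out
    have hc : MealyAux.agree δ out (Fintype.card Q ^ 2) q q' := fun w hw => h w hw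
    have hqn : MealyAux.agree δ out n q q' := MealyAux.agree_mono δ out hn hc
    have := MealyAux.agree_of_stable δ out hstable w.length q q' hqn
    exact this w (Nat.le_add_left _ _)
end

section
/- Let Φ: X × Q → Q × X be a Mealy automaton and let n ≥ 1. For words u = q₁…qₙ and v = q'₁…q'ₙ in Qⁿ, acting on X* by w^u = (…(w^{q₁})^{q₂}…)^{qₙ}, one has w^u = w^v for every w ∈ X* if and only if w^u = w^v for every word w ∈ X* of length at most |Q|^(2n). -/
namespace AutSGProof

open AutSG

variable {X Q : Type*} (δ : Q → X → Q) (out : Q → X → X)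

/-- One step of the "product" automaton whose states are words of states. -/
def stepW : List Q → X → List Q × X
  | [], x => ([], x)
  | q :: g, x =>
    (δ q x :: (stepW g (out q x)).1, (stepW g (out q x)).2)

lemma stepW_length (g : List Q) (x : X) : (stepW δ out g x).1.length = g.length := by
  induction g generalizing x with
  | nil => rfl
  | cons q g ih => simp [stepW, ih]

lemma mActW_cons (g : List Q) (x : X) (w : List X) :
    mActW δ out g (x :: w) =
      (stepW δ out g x).2 :: mActW δ out (stepW δ out g x).1 w := by
  induction g generalizing x w with
  | nil => rfl
  | cons q g ih =>
      show mActW δ out g (mAct δ out q (x :: w)) = _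
      show mActW δ out g (out q x :: mAct δ out (δ q x) w) = _
      rw [ih]
      rfl

/-- The transition function of the product automaton, on vectors of states. -/
def vδ {n : ℕ} (g : List.Vector Q n) (x : X) : List.Vector Q n :=
  ⟨(stepW δ out g.1 x).1, by rw [stepW_length]; exact g.2⟩

/-- The output function of the product automaton, on vectors of states. -/
def vout {n : ℕ} (g : List.Vector Q n) (x : X) : X :=
  (stepW δ out g.1 x).2

lemma mActW_nil (g : List Q) : mActW δ out g [] = [] := by
  induction g with
  | nil => rfl
  | cons q g ih => exact ih

lemma mActW_eq_vect {n : ℕ} (g : List.Vector Q n) (w : List X) :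
    mActW δ out g.1 w = mAct (vδ δ out) (vout δ out) g w := by
  induction w generalizing g with
  | nil => exact mActW_nil δ out g.1
  | cons x w ih =>
      rw [mActW_cons]
      show (stepW δ out g.1 x).2 :: mActW δ out (vδ δ out g x).1 w = _
      rw [ih (vδ δ out g x)]
      rfl

section General

variable {S : Type*} (d : S → X → S) (o : S → X → X)

/-- Pairs of states agreeing on all words of length at most `k`. -/
def E (k : ℕ) : Set (S × S) :=
  {p | ∀ w : List X, w.length ≤ k → mAct d o p.1 w = mAct d o p.2 w}

lemma E_anti {m m' : ℕ} (h : m ≤ m') : E (X := X) d o m' ⊆ E d o m :=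
  fun _ hp w hw => hp w (hw.trans h)

lemma mem_E_succ_iff {k : ℕ} {p : S × S} :
    p ∈ E (X := X) d o (k + 1) ↔
      (∀ x : X, o p.1 x = o p.2 x) ∧ ∀ x : X, (d p.1 x, d p.2 x) ∈ E (X := X) d o k := by
  constructor
  · intro h
    constructor
    · intro x
      have := h [x] (by simp)
      exact (List.cons.injEq _ _ _ _ ▸ this).1
    · intro x w hw
      have := h (x :: w) (by simpa using Nat.succ_le_succ hw)
      exact (List.cons.injEq _ _ _ _ ▸ this).2
  · rintro ⟨h1, h2⟩ w hw
    cases w with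
    | nil => rfl
    | cons x w =>
        show o p.1 x :: mAct d o (d p.1 x) w = o p.2 x :: mAct d o (d p.2 x) w
        rw [h1 x, h2 x w (Nat.le_of_succ_le_succ hw)]

lemma E_stab {k : ℕ} (h : E (X := X) d o k = E d o (k + 1)) :
    ∀ j, E (X := X) d o (k + j) = E d o k := by
  intro j
  induction j with
  | zero => rfl
  | succ j ih =>
      apply Set.Subset.antisymm (E_anti d o (by omega))
      intro p hp
      have hp1 : p ∈ E (X := X) d o (k + 1) := h ▸ hp
      obtain ⟨h1, h2⟩ := (mem_E_succ_iff d o).1 hp1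
      show p ∈ E (X := X) d o (k + j + 1)
      exact (mem_E_succ_iff d o).2 ⟨h1, fun x => ih.symm ▸ h2 x⟩

lemma key [Fintype S] (p : S × S) (h : p ∈ E (X := X) d o (Fintype.card (S × S))) :
    ∀ w : List X, mAct d o p.1 w = mAct d o p.2 w := by
  classical
  set N := Fintype.card (S × S) with hN
  -- there is some k ≤ N where the chain stabilizes
  have hex : ∃ k ≤ N, E (X := X) d o k = E d o (k + 1) := by
    by_contra hcon
    push_neg at hcon
    set F : ℕ → Finset (S × S) := fun k => Finset.univ.filter (· ∈ E (X := X) d o k) with hF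
    have hlt : ∀ k ≤ N, (F (k + 1)).card < (F k).card := by
      intro k hk
      apply Finset.card_lt_card
      rw [Finset.ssubset_iff_of_subset]
      · obtain ⟨q, hq1, hq2⟩ := Set.not_subset.1
          (fun hsub => hcon k hk (Set.Subset.antisymm hsub (E_anti d o (by omega))))
        exact ⟨q, by simp [hF, hq1], by simp [hF, hq2]⟩
      · intro q hq
        simp only [hF, Finset.mem_filter, Finset.mem_univ, true_and] at hq ⊢
        exact E_anti d o (by omega) hq
    have hchain : ∀ k ≤ N + 1, (F k).card + k ≤ (F 0).card := by
      intro k hk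
      induction k with
      | zero => simp
      | succ k ih =>
          have := hlt k (by omega)
          have := ih (by omega)
          omega
    have h0 : (F 0).card ≤ N := by
      rw [hN]
      exact Finset.card_le_card (Finset.subset_univ _) |>.trans (by simp)
    have := hchain (N + 1) le_rfl
    omega
  obtain ⟨k, hk, hstab⟩ := hex
  intro w
  have hp : p ∈ E (X := X) d o (k + w.length) := (E_stab d o hstab w.length).symm ▸
    (E_anti d o hk h)
  exact hp w (by omega)

end General

end AutSGProof

open AutSG in
/-- Two words `u, v ∈ Qⁿ` (`n ≥ 1`) of states of a Mealy automaton
`Φ : X × Q → Q × X` induce the same transformation of `X*` if and only if they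
agree on all words of length at most `|Q|^(2n)`. -/
theorem mealy_state_words_eq_iff_eq_on_short_words
    {X Q : Type*} [Fintype X] [Fintype Q] [Nonempty X] [Nonempty Q]
    (Φ : X × Q → Q × X) (n : ℕ) (hn : 1 ≤ n)
    (u v : List Q) (hu : u.length = n) (hv : v.length = n) :
    (∀ w : List X,
        mActW (fun s x => (Φ (x, s)).1) (fun s x => (Φ (x, s)).2) u w =
        mActW (fun s x => (Φ (x, s)).1) (fun s x => (Φ (x, s)).2) v w) ↔
    (∀ w : List X, w.length ≤ Fintype.card Q ^ (2 * n) →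
        mActW (fun s x => (Φ (x, s)).1) (fun s x => (Φ (x, s)).2) u w =
        mActW (fun s x => (Φ (x, s)).1) (fun s x => (Φ (x, s)).2) v w) := by
  classical
  constructor
  · exact fun h w _ => h w
  · intro h w
    set δ : Q → X → Q := fun s x => (Φ (x, s)).1 with hδ
    set o : Q → X → X := fun s x => (Φ (x, s)).2 with ho
    have hcard : Fintype.card (List.Vector Q n × List.Vector Q n)
        = Fintype.card Q ^ (2 * n) := by
      rw [Fintype.card_prod, card_vector, ← pow_add, ← two_mul]
    have hkey := AutSGProof.key (AutSGProof.vδ δ o) (AutSGProof.vout δ o)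
      ((⟨u, hu⟩ : List.Vector Q n), (⟨v, hv⟩ : List.Vector Q n))
      (by
        intro w' hw'
        show AutSG.mAct (Q := List.Vector Q n) _ _ ⟨u, hu⟩ w' = AutSG.mAct (Q := List.Vector Q n) _ _ ⟨v, hv⟩ w'
        refine (AutSGProof.mActW_eq_vect δ o ⟨u, hu⟩ w').symm.trans (Eq.trans ?_ (AutSGProof.mActW_eq_vect δ o ⟨v, hv⟩ w'))
        exact h w' (by rwa [hcard] at hw'))
    have := hkey w
    rwa [← AutSGProof.mActW_eq_vect, ← AutSGProof.mActW_eq_vect] at this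
end
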